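/- In F2[t_1, ..., t_6] with the Steenrod algebra action, the cohit space QP_4^{⊗6} (degree-4 homogeneous polynomials modulo hit elements) has dimension 85 over F2. -/

import Mathlib

open MvPolynomial

/-- The total Steenrod square on `F2[t_1,…,t_h]`: the algebra endomorphism `t_j ↦ t_j + t_j^2`.
Its degree-`(m+k)` homogeneous component on a degree-`m` homogeneous polynomial is `Sq^k`,
which on monomials agrees with the Cartan formula and `Sq^k(t_j^m) = C(m,k) t_j^{m+k}` mod 2. -/
noncomputable def sqT (h : ℕ) :
    MvPolynomial (Fin h) (ZMod 2) →ₐ[ZMod 2] MvPolynomial (Fin h) (ZMod 2) :=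
  aeval (fun j => X j + X j ^ 2)

/-- The hit subspace in degree `n`: the span of all `Sq^k f` with `1 ≤ k ≤ n` and
`f` homogeneous of degree `n − k` (i.e. the degree-`n` component of the total square of `f`). -/
noncomputable def hitSub (h n : ℕ) : Submodule (ZMod 2) (MvPolynomial (Fin h) (ZMod 2)) :=
  Submodule.span (ZMod 2)
    {g | ∃ k f, 1 ≤ k ∧ k ≤ n ∧ MvPolynomial.IsHomogeneous f (n - k) ∧
      g = MvPolynomial.homogeneousComponent n (sqT h f)}

/-- The cohit space `QP_n^{⊗h}`: degree-`n` homogeneous polynomials modulo hit elements. -/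
abbrev QP (h n : ℕ) :=
  ↥(homogeneousSubmodule (Fin h) (ZMod 2) n) ⧸
    ((hitSub h n).comap (homogeneousSubmodule (Fin h) (ZMod 2) n).subtype)

/-!
In degree 4 the hit elements are `Sq^1` of cubics and `Sq^2` of quadratics (`Sq^3` kills linear
forms and `Sq^4` kills constants). On products of variables the Cartan formula and `2 = 0`
show that they are spanned by `t_a^4`, `t_a^2 t_b^2` (`a ≠ b`) and `(t_a + t_b + t_c) t_a t_b t_c`
(`a`, `b`, `c` distinct). Every monomial of such a polynomial involves precisely the variables
indexing it, so their supports are disjoint and they form a basis of the hit space,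
of dimension `h + C(h,2) + C(h,3)`. The quotient of the `C(h+3,4)`-dimensional space of quartics
therefore has dimension `126 - 41 = 85` when `h = 6`.
-/

open Finset Function

namespace MvPolynomial

variable {σ R : Type*}

theorem linearIndependent_of_pairwise_disjoint_support [CommRing R] [NoZeroDivisors R]
    {ι : Type*} {v : ι → MvPolynomial σ R} (hv : ∀ i, v i ≠ 0)
    (hdisj : Pairwise (Disjoint on fun i => (v i).support)) : LinearIndependent R v := by
  classical
  rw [linearIndependent_iff']
  intro s g hsum i hi
  obtain ⟨d, hd⟩ := support_nonempty.2 (hv i)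
  have hcoeff := congr_arg (coeff d) hsum
  rw [coeff_sum, Finset.sum_eq_single i, coeff_smul, smul_eq_mul, coeff_zero] at hcoeff
  · exact (mul_eq_zero.1 hcoeff).resolve_right (mem_support_iff.1 hd)
  · intro j _ hji
    rw [coeff_smul, notMem_support_iff.1 (Finset.disjoint_left.1 (hdisj hji.symm) hd), smul_zero]
  · exact fun hi' => absurd hi hi'

theorem monomial_toFinsupp_one [CommSemiring R] [DecidableEq σ] (m : Multiset σ) :
    monomial (Multiset.toFinsupp m) (1 : R) = (m.map X).prod := by
  induction m using Multiset.induction_on with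
  | empty => simp
  | cons a m ih =>
    rw [← Multiset.singleton_add, Multiset.toFinsupp_add, Multiset.toFinsupp_singleton,
      ← mul_one (1 : R), ← monomial_mul, ih]
    simp [X]

theorem support_eq_toFinset_of_mem_support_prod_X [CommSemiring R] [DecidableEq σ]
    (m : Multiset σ) {d : σ →₀ ℕ} (hd : d ∈ ((m.map X).prod : MvPolynomial σ R).support) :
    d.support = m.toFinset := by
  rw [← monomial_toFinsupp_one, Finset.mem_coe.symm] at hd
  rw [Finset.mem_singleton.1 (support_monomial_subset hd), Multiset.toFinsupp_support]

theorem finrank_homogeneousSubmodule [Fintype σ] [CommRing R] [Nontrivial R] (n : ℕ) :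
    Module.finrank R (homogeneousSubmodule σ R n) = (Fintype.card σ).multichoose n := by
  classical
  have hset : {d : σ →₀ ℕ | d.degree = n} = ↑(univ.finsuppAntidiag n : Finset (σ →₀ ℕ)) := by
    ext d
    simp [Finsupp.degree_eq_sum]
  rw [homogeneousSubmodule_eq_finsupp_supported, ← restrictSupport,
    Module.finrank_eq_nat_card_basis (basisRestrictSupport R {d : σ →₀ ℕ | d.degree = n}), hset,
    Nat.card_coe_set_eq, Set.ncard_coe_finset, card_finsuppAntidiag_nat_eq_multichoose, card_univ]

end MvPolynomial

theorem hitSub_le_homogeneousSubmodule (h n : ℕ) :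
    hitSub h n ≤ homogeneousSubmodule (Fin h) (ZMod 2) n :=
  Submodule.span_le.2 fun _ ⟨_, _, _, _, _, hg⟩ => hg ▸ homogeneousComponent_mem n _

theorem finrank_QP (h n : ℕ) :
    Module.finrank (ZMod 2) (QP h n) =
      Module.finrank (ZMod 2) (homogeneousSubmodule (Fin h) (ZMod 2) n) -
        Module.finrank (ZMod 2) (hitSub h n) := by
  unfold QP
  have : Module.Finite (ZMod 2) (homogeneousSubmodule (Fin h) (ZMod 2) n) :=
    Module.Finite.iff_fg.2 (homogeneousSubmodule_fg (Fin h) (ZMod 2) n)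
  have hsum := Submodule.finrank_quotient_add_finrank
    ((hitSub h n).comap (homogeneousSubmodule (Fin h) (ZMod 2) n).subtype)
  rw [(Submodule.comapSubtypeEquivOfLe (hitSub_le_homogeneousSubmodule h n)).finrank_eq] at hsum
  omega

section

variable {h : ℕ}

theorem homogeneousComponent_sqT_mem_hitSub {n k : ℕ} {f : MvPolynomial (Fin h) (ZMod 2)}
    (hk : 1 ≤ k) (hkn : k ≤ n) (hf : f.IsHomogeneous (n - k)) :
    homogeneousComponent n (sqT h f) ∈ hitSub h n :=
  Submodule.subset_span ⟨k, f, hk, hkn, hf, rfl⟩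

theorem sqT_X (a : Fin h) : sqT h (X a) = X a + X a ^ 2 := aeval_X _ a

theorem homogeneousComponent_four_sqT_one : homogeneousComponent 4 (sqT h 1) = 0 := by
  rw [map_one, homogeneousComponent_of_mem (isHomogeneous_one _ _), if_neg (by norm_num)]

theorem homogeneousComponent_four_sqT_X (a : Fin h) :
    homogeneousComponent 4 (sqT h (X a)) = 0 := by
  have hX := isHomogeneous_X (ZMod 2) a
  rw [sqT_X, map_add, homogeneousComponent_of_mem hX, homogeneousComponent_of_mem (hX.pow 2)]
  simp

theorem homogeneousComponent_four_sqT_X_mul_X (a b : Fin h) :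
    homogeneousComponent 4 (sqT h (X a * X b)) = (X a * X b) ^ 2 := by
  have hX := isHomogeneous_X (ZMod 2) (σ := Fin h)
  have hm := (hX a).mul (hX b)
  have expand : sqT h (X a * X b) = X a * X b + X a * X b * (X a + X b) + (X a * X b) ^ 2 := by
    rw [map_mul, sqT_X, sqT_X]
    ring
  rw [expand, map_add, map_add, homogeneousComponent_of_mem hm,
    homogeneousComponent_of_mem (hm.mul ((hX a).add (hX b))),
    homogeneousComponent_of_mem (hm.pow 2)]
  simp

theorem homogeneousComponent_four_sqT_X_mul_X_mul_X (a b c : Fin h) :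
    homogeneousComponent 4 (sqT h (X a * X b * X c)) =
      (X a + X b + X c) * (X a * X b * X c) := by
  have hX := isHomogeneous_X (ZMod 2) (σ := Fin h)
  have hm := ((hX a).mul (hX b)).mul (hX c)
  have expand : sqT h (X a * X b * X c) = X a * X b * X c + (X a + X b + X c) * (X a * X b * X c)
      + (X a * X b + X a * X c + X b * X c) * (X a * X b * X c) + (X a * X b * X c) ^ 2 := by
    simp only [map_mul, sqT_X]
    ring
  rw [expand, map_add, map_add, map_add, homogeneousComponent_of_mem hm,
    homogeneousComponent_of_mem ((((hX a).add (hX b)).add (hX c)).mul hm),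
    homogeneousComponent_of_mem
      (((((hX a).mul (hX b)).add ((hX a).mul (hX c))).add ((hX b).mul (hX c))).mul hm),
    homogeneousComponent_of_mem (hm.pow 2)]
  simp

abbrev HitIndex (h : ℕ) : Type :=
  {s : Finset (Fin h) // #s = 1} ⊕ {s : Finset (Fin h) // #s = 2} ⊕ {s : Finset (Fin h) // #s = 3}

def HitIndex.toFinset : HitIndex h → Finset (Fin h) :=
  Sum.elim Subtype.val (Sum.elim Subtype.val Subtype.val)

theorem HitIndex.toFinset_injective : Injective (HitIndex.toFinset (h := h)) := by
  rintro (⟨s, hs⟩ | ⟨s, hs⟩ | ⟨s, hs⟩) (⟨t, ht⟩ | ⟨t, ht⟩ | ⟨t, ht⟩) (hst : s = t) <;>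
    subst hst <;> first | rfl | omega

noncomputable def hitBasis : HitIndex h → MvPolynomial (Fin h) (ZMod 2)
  | .inl s => (∏ a ∈ s.1, X a) ^ 4
  | .inr (.inl s) => (∏ a ∈ s.1, X a) ^ 2
  | .inr (.inr s) => (∑ a ∈ s.1, X a) * ∏ a ∈ s.1, X a

theorem support_eq_toFinset_of_mem_support_hitBasis (γ : HitIndex h) {d : Fin h →₀ ℕ}
    (hd : d ∈ (hitBasis γ).support) : d.support = γ.toFinset := by
  have hpow : ∀ (s : Finset (Fin h)) (k : ℕ),
      (∏ a ∈ s, X a : MvPolynomial (Fin h) (ZMod 2)) ^ k = ((k • s.val).map X).prod := by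
    intro s k
    rw [Multiset.map_nsmul, Multiset.prod_nsmul, Finset.prod_eq_multiset_prod]
  rcases γ with ⟨s, hs⟩ | ⟨s, hs⟩ | ⟨s, hs⟩
  · rw [hitBasis, hpow] at hd
    rw [support_eq_toFinset_of_mem_support_prod_X _ hd,
      Multiset.toFinset_nsmul _ _ (by norm_num), Finset.val_toFinset]
    rfl
  · rw [hitBasis, hpow] at hd
    rw [support_eq_toFinset_of_mem_support_prod_X _ hd,
      Multiset.toFinset_nsmul _ _ (by norm_num), Finset.val_toFinset]
    rfl
  · have hsum : (∑ a ∈ s, X a) * ∏ a ∈ s, X a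
        = ∑ a ∈ s, (((a ::ₘ s.val).map X).prod : MvPolynomial (Fin h) (ZMod 2)) := by
      rw [Finset.sum_mul]
      simp only [Multiset.map_cons, Multiset.prod_cons, Finset.prod_map_val]
    rw [hitBasis, hsum] at hd
    obtain ⟨a, ha, hd⟩ := Finset.mem_biUnion.1 (support_sum hd)
    rw [support_eq_toFinset_of_mem_support_prod_X _ hd, Multiset.toFinset_cons,
      Finset.val_toFinset, Finset.insert_eq_of_mem ha]
    rfl

theorem hitBasis_ne_zero (γ : HitIndex h) : hitBasis γ ≠ 0 := by
  have hprod : ∀ s : Finset (Fin h), (∏ a ∈ s, X a : MvPolynomial (Fin h) (ZMod 2)) ≠ 0 :=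
    fun s => Finset.prod_ne_zero_iff.2 fun a _ => X_ne_zero a
  rcases γ with ⟨s, hs⟩ | ⟨s, hs⟩ | ⟨s, hs⟩
  · exact pow_ne_zero _ (hprod s)
  · exact pow_ne_zero _ (hprod s)
  · refine mul_ne_zero ?_ (hprod s)
    obtain ⟨a, ha⟩ := Finset.card_pos.1 (by omega : 0 < #s)
    intro hzero
    have hcoeff := congr_arg (coeff (Finsupp.single a 1)) hzero
    simp [coeff_sum, coeff_X, Finsupp.single_left_inj one_ne_zero, ha] at hcoeff

theorem linearIndependent_hitBasis : LinearIndependent (ZMod 2) (hitBasis (h := h)) := by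
  refine linearIndependent_of_pairwise_disjoint_support hitBasis_ne_zero fun γ γ' hne => ?_
  refine Finset.disjoint_left.2 fun d hd hd' => hne (HitIndex.toFinset_injective ?_)
  rw [← support_eq_toFinset_of_mem_support_hitBasis γ hd,
    support_eq_toFinset_of_mem_support_hitBasis γ' hd']

theorem hitBasis_mem_hitSub (γ : HitIndex h) : hitBasis γ ∈ hitSub h 4 := by
  have hX := isHomogeneous_X (ZMod 2) (σ := Fin h)
  rcases γ with ⟨s, hs⟩ | ⟨s, hs⟩ | ⟨s, hs⟩
  · obtain ⟨a, rfl⟩ := card_eq_one.1 hs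
    have hsq := homogeneousComponent_sqT_mem_hitSub (n := 4) (k := 2) (by norm_num) (by norm_num)
      ((hX a).mul (hX a))
    rw [homogeneousComponent_four_sqT_X_mul_X] at hsq
    convert hsq using 1
    simp only [hitBasis, prod_singleton]
    ring
  · obtain ⟨a, b, hab, rfl⟩ := card_eq_two.1 hs
    have hsq := homogeneousComponent_sqT_mem_hitSub (n := 4) (k := 2) (by norm_num) (by norm_num)
      ((hX a).mul (hX b))
    rwa [homogeneousComponent_four_sqT_X_mul_X, ← prod_pair hab] at hsq
  · obtain ⟨a, b, c, hab, hac, hbc, rfl⟩ := card_eq_three.1 hs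
    have hsq := homogeneousComponent_sqT_mem_hitSub (n := 4) (k := 1) (by norm_num) (by norm_num)
      (((hX a).mul (hX b)).mul (hX c))
    rw [homogeneousComponent_four_sqT_X_mul_X_mul_X] at hsq
    convert hsq using 1
    simp only [hitBasis, mem_insert, mem_singleton, hab, hac, hbc, or_self, not_false_eq_true,
      sum_insert, sum_singleton, prod_insert, prod_singleton]
    ring

theorem hitBasis_mem_span (γ : HitIndex h) :
    hitBasis γ ∈ Submodule.span (ZMod 2) (Set.range (hitBasis (h := h))) :=
  Submodule.subset_span (Set.mem_range_self γ)

theorem sq_X_mul_X_mem_span_hitBasis (a b : Fin h) :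
    (X a * X b) ^ 2 ∈ Submodule.span (ZMod 2) (Set.range (hitBasis (h := h))) := by
  rcases eq_or_ne a b with rfl | hab
  · convert hitBasis_mem_span (.inl ⟨{a}, card_singleton a⟩) using 1
    simp only [hitBasis, prod_singleton]
    ring
  · convert hitBasis_mem_span (.inr (.inl ⟨{a, b}, card_pair hab⟩)) using 1
    simp only [hitBasis, prod_pair hab]

theorem sum_mul_prod_three_mem_span_hitBasis (a b c : Fin h) :
    (X a + X b + X c) * (X a * X b * X c) ∈
      Submodule.span (ZMod 2) (Set.range (hitBasis (h := h))) := by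
  have two : (2 : MvPolynomial (Fin h) (ZMod 2)) = 0 := CharTwo.two_eq_zero
  by_cases hab : a = b
  · subst hab
    convert sq_X_mul_X_mem_span_hitBasis a c using 1
    linear_combination (X a ^ 3 * X c) * two
  by_cases hac : a = c
  · subst hac
    convert sq_X_mul_X_mem_span_hitBasis a b using 1
    linear_combination (X a ^ 3 * X b) * two
  by_cases hbc : b = c
  · subst hbc
    convert sq_X_mul_X_mem_span_hitBasis a b using 1
    linear_combination (X a * X b ^ 3) * two
  convert hitBasis_mem_span
    (.inr (.inr ⟨{a, b, c}, card_eq_three.2 ⟨a, b, c, hab, hac, hbc, rfl⟩⟩)) using 1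
  simp only [hitBasis, mem_insert, mem_singleton, hab, hac, hbc, or_self, not_false_eq_true,
    sum_insert, sum_singleton, prod_insert, prod_singleton]
  ring

theorem homogeneousComponent_four_sqT_prod_X_mem_span_hitBasis (m : Multiset (Fin h))
    (hm : Multiset.card m ≤ 3) :
    homogeneousComponent 4 (sqT h (m.map X).prod) ∈
      Submodule.span (ZMod 2) (Set.range (hitBasis (h := h))) := by
  rcases (by omega : Multiset.card m = 0 ∨ Multiset.card m = 1 ∨ Multiset.card m = 2 ∨
      Multiset.card m = 3) with hm | hm | hm | hm
  · rw [Multiset.card_eq_zero.1 hm, Multiset.map_zero, Multiset.prod_zero,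
      homogeneousComponent_four_sqT_one]
    exact Submodule.zero_mem _
  · obtain ⟨a, rfl⟩ := Multiset.card_eq_one.1 hm
    rw [Multiset.map_singleton, Multiset.prod_singleton, homogeneousComponent_four_sqT_X]
    exact Submodule.zero_mem _
  · obtain ⟨a, b, rfl⟩ := Multiset.card_eq_two.1 hm
    simp only [Multiset.insert_eq_cons, Multiset.map_cons, Multiset.prod_cons,
      Multiset.map_singleton, Multiset.prod_singleton]
    rw [homogeneousComponent_four_sqT_X_mul_X]
    exact sq_X_mul_X_mem_span_hitBasis a b
  · obtain ⟨a, b, c, rfl⟩ := Multiset.card_eq_three.1 hm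
    simp only [Multiset.insert_eq_cons, Multiset.map_cons, Multiset.prod_cons,
      Multiset.map_singleton, Multiset.prod_singleton]
    rw [← mul_assoc, homogeneousComponent_four_sqT_X_mul_X_mul_X]
    exact sum_mul_prod_three_mem_span_hitBasis a b c

theorem homogeneousComponent_four_sqT_monomial_mem_span_hitBasis {d : Fin h →₀ ℕ}
    (hd : d.degree ≤ 3) (c : ZMod 2) :
    homogeneousComponent 4 (sqT h (monomial d c)) ∈
      Submodule.span (ZMod 2) (Set.range (hitBasis (h := h))) := by
  have hcard : Multiset.card (Finsupp.toMultiset d) ≤ 3 := by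
    rwa [Finsupp.card_toMultiset]
  rw [show monomial d c = c • monomial d 1 by rw [smul_monomial, smul_eq_mul, mul_one],
    map_smul, map_smul, ← Finsupp.toMultiset_toFinsupp d, monomial_toFinsupp_one]
  exact Submodule.smul_mem _ _ (homogeneousComponent_four_sqT_prod_X_mem_span_hitBasis _ hcard)

theorem hitSub_four_eq_span_hitBasis :
    hitSub h 4 = Submodule.span (ZMod 2) (Set.range (hitBasis (h := h))) := by
  refine le_antisymm (Submodule.span_le.2 ?_) (Submodule.span_le.2 ?_)
  · rintro g ⟨k, f, hk, -, hf, rfl⟩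
    rw [f.as_sum, map_sum, map_sum]
    refine Submodule.sum_mem _ fun d hd => ?_
    have hdeg : d.degree = 4 - k := by
      rw [Finsupp.degree_eq_weight_one]
      exact hf (mem_support_iff.1 hd)
    exact homogeneousComponent_four_sqT_monomial_mem_span_hitBasis (by omega) _
  · rintro g ⟨γ, rfl⟩
    exact hitBasis_mem_hitSub γ

theorem finrank_hitSub_four :
    Module.finrank (ZMod 2) (hitSub h 4) = h + h.choose 2 + h.choose 3 := by
  rw [hitSub_four_eq_span_hitBasis, finrank_span_eq_card linearIndependent_hitBasis]
  simp [Fintype.card_finset_len, add_assoc]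

end

theorem finrank_QP_four (h : ℕ) :
    Module.finrank (ZMod 2) (QP h 4) = h.multichoose 4 - (h + h.choose 2 + h.choose 3) := by
  rw [finrank_QP, finrank_homogeneousSubmodule, finrank_hitSub_four, Fintype.card_fin]

/-- The cohit space `QP_4^{⊗6}` has dimension 85 over `F2`. -/
theorem dim_QP_6_4 : Module.finrank (ZMod 2) (QP 6 4) = 85 := by
  rw [finrank_QP_four, Nat.multichoose_eq]
  rfl
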